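/- Suppose the FiF caches of all sizes are nested at time $t$, inducing a ranking $p_1, p_2, \ldots$ of pages where $p_m$ is the unique page in $C^m_t \setminus C^{m-1}_t$. Let the page requested at time $t+1$ be $p_{m_0}$ at position $m_0$. Define a strictly decreasing sequence $m_0 > m_1 > \cdots > m_b = 1$ where, given $m_a$, the index $m_{a+1}$ is the position of the page among $\{p_1, \ldots, p_{m_a - 1}\}$ whose next request after time $t+1$ is farthest in the future. Then in the ranking induced at time $t+1$: page $p_{m_0}$ is at position $1$; for each $a = 1, \ldots, b$, page $p_{m_a}$ is at position $m_{a-1}$; and all other pages keep their positions. -/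
import Mathlib



/-- Time of the next request to page `p` strictly after time `t` (`⊤` if never requested again). -/
noncomputable def nextReq (r : ℕ → ℕ) (t p : ℕ) : ℕ∞ :=
  sInf ((fun s : ℕ => (s : ℕ∞)) '' {s : ℕ | t < s ∧ r s = p})

/-- Tie-breaking key: pages compared by next-request time, ties broken by page id. -/
noncomputable def fifKey (r : ℕ → ℕ) (t p : ℕ) : ℕ∞ ×ₗ ℕ :=
  toLex ((nextReq r t p, p) : ℕ∞ × ℕ)

/-- The page evicted by Farthest-in-Future from cache `C` at time `t`:
the page of `C` whose next request after time `t` is farthest in the future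
(ties broken by the fixed rule). -/
noncomputable def victim (r : ℕ → ℕ) (t : ℕ) (C : Finset ℕ) : ℕ :=
  if h : C.Nonempty then
    Classical.choose (C.exists_max_image (fifKey r t) h)
  else 0

/-- One step of Belady's FiF algorithm: serve the request `r (t+1)` from cache `C`. -/
noncomputable def fifStep (r : ℕ → ℕ) (t : ℕ) (C : Finset ℕ) : Finset ℕ :=
  if r (t+1) ∈ C then C
  else if C = ∅ then C
  else insert (r (t+1)) (C.erase (victim r (t+1) C))

/-- The cache of FiF at time `t`, starting from initial configuration `C0` and
serving requests `r 1, r 2, …`. -/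
noncomputable def fifCache (r : ℕ → ℕ) (C0 : Finset ℕ) : ℕ → Finset ℕ
  | 0 => C0
  | t+1 => fifStep r t (fifCache r C0 t)

/-- The position of page `p` in the Belady ranking at time `t`: the least cache size `m`
such that `p` is in the cache of `FiF^m` at time `t`. -/
noncomputable def beladyPos (r : ℕ → ℕ) (C0 : ℕ → Finset ℕ) (t p : ℕ) : ℕ :=
  sInf {m | p ∈ fifCache r (C0 m) t}

lemma fifKey_inj {r : ℕ → ℕ} {t p p' : ℕ} (h : fifKey r t p = fifKey r t p') : p = p' :=
  congrArg (fun x => (ofLex x).2) h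

lemma victim_spec (r : ℕ → ℕ) (t : ℕ) {C : Finset ℕ} (h : C.Nonempty) :
    victim r t C ∈ C ∧ ∀ a ∈ C, fifKey r t a ≤ fifKey r t (victim r t C) := by
  rw [victim, dif_pos h]
  exact Classical.choose_spec (C.exists_max_image (fifKey r t) h)

lemma victim_eq {r : ℕ → ℕ} {t : ℕ} {C : Finset ℕ} {x : ℕ} (hx : x ∈ C)
    (hmax : ∀ y ∈ C, fifKey r t y ≤ fifKey r t x) : victim r t C = x := by
  have h : C.Nonempty := ⟨x, hx⟩
  obtain ⟨hmem, hspec⟩ := victim_spec r t h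
  exact fifKey_inj (le_antisymm (hmax _ hmem) (hspec x hx))

lemma victim_subset {r : ℕ → ℕ} {t : ℕ} {C D : Finset ℕ} (hCD : C ⊆ D) (hD : D.Nonempty)
    (hx : victim r t D ∈ C) : victim r t C = victim r t D :=
  victim_eq hx (fun y hy => (victim_spec r t hD).2 y (hCD hy))

lemma fifCache_card (r : ℕ → ℕ) (C0 : Finset ℕ) : ∀ t, (fifCache r C0 t).card = C0.card
  | 0 => rfl
  | t+1 => by
    have ih := fifCache_card r C0 t
    show (fifStep r t (fifCache r C0 t)).card = _
    rw [fifStep]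
    by_cases h1 : r (t+1) ∈ fifCache r C0 t
    · rw [if_pos h1]; exact ih
    · rw [if_neg h1]
      by_cases h2 : fifCache r C0 t = ∅
      · rw [if_pos h2]; exact ih
      · rw [if_neg h2]
        have hne : (fifCache r C0 t).Nonempty := Finset.nonempty_iff_ne_empty.2 h2
        have hv := (victim_spec r (t+1) hne).1
        have hcpos : 1 ≤ (fifCache r C0 t).card := Finset.card_pos.2 hne
        rw [Finset.card_insert_of_notMem (fun h => h1 (Finset.mem_of_mem_erase h)),
          Finset.card_erase_of_mem hv]
        omega

lemma fifCache_subset (r : ℕ → ℕ) {C0 D0 : Finset ℕ} (h : C0 ⊆ D0) :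
    ∀ t, fifCache r C0 t ⊆ fifCache r D0 t
  | 0 => h
  | t+1 => by
    have ih := fifCache_subset r h t
    show fifStep r t (fifCache r C0 t) ⊆ fifStep r t (fifCache r D0 t)
    set C := fifCache r C0 t with hCdef
    set D := fifCache r D0 t with hDdef
    rw [fifStep, fifStep]
    by_cases h1 : r (t+1) ∈ C
    · rw [if_pos h1, if_pos (ih h1)]; exact ih
    · rw [if_neg h1]
      by_cases h2 : C = ∅
      · rw [if_pos h2, h2]
        intro x hx; simp at hx
      · rw [if_neg h2]
        have hCne : C.Nonempty := Finset.nonempty_iff_ne_empty.2 h2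
        have hDne : D.Nonempty := hCne.mono ih
        by_cases h3 : r (t+1) ∈ D
        · rw [if_pos h3]
          intro x hx
          rcases Finset.mem_insert.1 hx with rfl | hx
          · exact h3
          · exact ih (Finset.mem_of_mem_erase hx)
        · rw [if_neg h3, if_neg (Finset.nonempty_iff_ne_empty.1 hDne)]
          apply Finset.insert_subset_insert
          intro x hx
          rcases Finset.mem_erase.1 hx with ⟨hxv, hxC⟩
          refine Finset.mem_erase.2 ⟨?_, ih hxC⟩
          intro hxvD
          exact hxv (hxvD.trans (victim_subset ih hDne (hxvD ▸ hxC)).symm)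

/-- **Belady ranking update.**
Suppose the FiF caches of all sizes are nested, inducing the Belady ranking, and the page
requested at time `t+1` sits at position `m₀ = msq 0` of the ranking at time `t`.
Let `msq 0 > msq 1 > ⋯ > msq b = 1` be the cascade sequence, where `msq (a+1)` is the
position of the page among the first `msq a - 1` ranked pages (i.e. the cache of size
`msq a - 1`) whose next request after time `t+1` is farthest in the future.
Then at time `t+1`: the requested page is at position `1`; for `a = 1, …, b` the page that
was at position `msq a` moves to position `msq (a-1)`; all other pages keep their positions. -/
theorem belady_ranking_update
    (r : ℕ → ℕ) (C0 : ℕ → Finset ℕ) (n : ℕ)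
    (hnest : ∀ m, C0 m ⊆ C0 (m+1)) (hcard : ∀ m, (C0 m).card = m)
    (huniv : ∀ s, r s ∈ C0 n)
    (t b : ℕ) (msq : ℕ → ℕ)
    (h0 : msq 0 = beladyPos r C0 t (r (t+1)))
    (hdec : ∀ a < b, msq (a+1) < msq a)
    (hstep : ∀ a < b, 1 < msq a ∧
      msq (a+1) = beladyPos r C0 t (victim r (t+1) (fifCache r (C0 (msq a - 1)) t)))
    (hb : msq b = 1) :
    beladyPos r C0 (t+1) (r (t+1)) = 1 ∧
    (∀ a, 1 ≤ a → a ≤ b → ∀ p, p ∈ C0 n → beladyPos r C0 t p = msq a →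
      beladyPos r C0 (t+1) p = msq (a-1)) ∧
    (∀ p, p ∈ C0 n → p ≠ r (t+1) → (∀ a, a ≤ b → beladyPos r C0 t p ≠ msq a) →
      beladyPos r C0 (t+1) p = beladyPos r C0 t p) := by
  
  classical
  have hC : ∀ m s, (fifCache r (C0 m) s).card = m := fun m s =>
    (fifCache_card r (C0 m) s).trans (hcard m)
  have hC0mono : ∀ {m m'}, m ≤ m' → C0 m ⊆ C0 m' := by
    intro m m' h
    induction h with
    | refl => exact Finset.Subset.refl _
    | step _ ih => exact ih.trans (hnest _)
  have hS : ∀ {m m'}, m ≤ m' → ∀ s, fifCache r (C0 m) s ⊆ fifCache r (C0 m') s :=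
    fun {m m'} h s => fifCache_subset r (hC0mono h) s
  have hfix : ∀ s, fifCache r (C0 n) s = C0 n := by
    intro s
    induction s with
    | zero => rfl
    | succ s ih =>
      show fifStep r s (fifCache r (C0 n) s) = C0 n
      rw [ih, fifStep, if_pos (huniv (s+1))]
  have hposle : ∀ s p m, p ∈ fifCache r (C0 m) s → beladyPos r C0 s p ≤ m :=
    fun s p m h => Nat.sInf_le h
  have hposmem : ∀ s p, p ∈ C0 n → p ∈ fifCache r (C0 (beladyPos r C0 s p)) s := by
    intro s p hp
    have hn : p ∈ fifCache r (C0 n) s := by rw [hfix s]; exact hp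
    have hne : {m | p ∈ fifCache r (C0 m) s}.Nonempty := ⟨n, hn⟩
    exact Nat.sInf_mem hne
  have hposiff : ∀ s p m, p ∈ C0 n → (p ∈ fifCache r (C0 m) s ↔ beladyPos r C0 s p ≤ m) :=
    fun s p m hp => ⟨hposle s p m, fun h => hS h s (hposmem s p hp)⟩
  have hzero : ∀ s, fifCache r (C0 0) s = ∅ := fun s => Finset.card_eq_zero.mp (hC 0 s)
  have hpospos : ∀ s p, p ∈ C0 n → 1 ≤ beladyPos r C0 s p := by
    intro s p hp
    by_contra hcon
    have h0' : beladyPos r C0 s p = 0 := by omega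
    have hmem := hposmem s p hp
    rw [h0', hzero s] at hmem
    exact absurd hmem (Finset.notMem_empty p)
  have hposinj : ∀ s p p', p ∈ C0 n → p' ∈ C0 n →
      beladyPos r C0 s p = beladyPos r C0 s p' → p = p' := by
    intro s p p' hp hp' he
    have hk1 : 1 ≤ beladyPos r C0 s p := hpospos s p hp
    have hmp : p ∈ fifCache r (C0 (beladyPos r C0 s p)) s := hposmem s p hp
    have hmp' : p' ∈ fifCache r (C0 (beladyPos r C0 s p)) s := by
      have h := hposmem s p' hp'; rw [← he] at h; exact h
    have hnp : p ∉ fifCache r (C0 (beladyPos r C0 s p - 1)) s := fun h => by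
      have := hposle s p _ h; omega
    have hnp' : p' ∉ fifCache r (C0 (beladyPos r C0 s p - 1)) s := fun h => by
      have hh := hposle s p' _ h; rw [← he] at hh; omega
    have hsd : (fifCache r (C0 (beladyPos r C0 s p)) s \
        fifCache r (C0 (beladyPos r C0 s p - 1)) s).card = 1 := by
      rw [Finset.card_sdiff_of_subset (hS (by omega) s), hC, hC]; omega
    obtain ⟨x, hx⟩ := Finset.card_eq_one.mp hsd
    have e1 : p = x := Finset.mem_singleton.mp (hx ▸ Finset.mem_sdiff.2 ⟨hmp, hnp⟩)
    have e2 : p' = x := Finset.mem_singleton.mp (hx ▸ Finset.mem_sdiff.2 ⟨hmp', hnp'⟩)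
    rw [e1, e2]
  have hqn : r (t+1) ∈ C0 n := huniv (t+1)
  have hq0 : beladyPos r C0 t (r (t+1)) = msq 0 := h0.symm
  have hmsqlt : ∀ a' a, a < a' → a' ≤ b → msq a' < msq a := by
    intro a'
    induction a' with
    | zero => intro a h _; omega
    | succ c ih =>
      intro a h hle
      have hc := hdec c (by omega)
      rcases Nat.lt_succ_iff_lt_or_eq.mp h with h' | h'
      · exact lt_trans hc (ih a h' (by omega))
      · rw [h']; exact hc
  have hmsqle : ∀ a a', a ≤ a' → a' ≤ b → msq a' ≤ msq a := by
    intro a a' h hle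
    rcases Nat.eq_or_lt_of_le h with h' | h'
    · exact le_of_eq (congrArg msq h'.symm)
    · exact le_of_lt (hmsqlt a' a h' hle)
  have hmsq1 : ∀ a, a ≤ b → 1 ≤ msq a := by
    intro a ha
    rcases Nat.lt_or_ge a b with h' | h'
    · exact le_of_lt (hstep a h').1
    · have he : a = b := by omega
      rw [he, hb]
  have hstep_ge : ∀ m, msq 0 ≤ m → fifCache r (C0 m) (t+1) = fifCache r (C0 m) t := by
    intro m hm
    have hq : r (t+1) ∈ fifCache r (C0 m) t := (hposiff t (r (t+1)) m hqn).2 (by omega)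
    show fifStep r t (fifCache r (C0 m) t) = _
    rw [fifStep, if_pos hq]
  have hstep_lt : ∀ m, 1 ≤ m → m < msq 0 → fifCache r (C0 m) (t+1) =
      insert (r (t+1)) ((fifCache r (C0 m) t).erase (victim r (t+1) (fifCache r (C0 m) t))) := by
    intro m h1 h2
    have hq : r (t+1) ∉ fifCache r (C0 m) t := fun h => by
      have := hposle t (r (t+1)) m h; omega
    have hne : fifCache r (C0 m) t ≠ ∅ := by
      intro h
      have hc := hC m t
      rw [h, Finset.card_empty] at hc
      omega
    show fifStep r t (fifCache r (C0 m) t) = _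
    rw [fifStep, if_neg hq, if_neg hne]
  have hset : ∀ p k, 1 ≤ k → p ∈ fifCache r (C0 k) (t+1) →
      (∀ m, m < k → p ∉ fifCache r (C0 m) (t+1)) → beladyPos r C0 (t+1) p = k := by
    intro p k hk hmem hnot
    have h1 : beladyPos r C0 (t+1) p ≤ k := Nat.sInf_le hmem
    have hne' : {m | p ∈ fifCache r (C0 m) (t+1)}.Nonempty := ⟨k, hmem⟩
    have h2 : p ∈ fifCache r (C0 (beladyPos r C0 (t+1) p)) (t+1) := Nat.sInf_mem hne'
    by_contra hne
    exact hnot _ (lt_of_le_of_ne h1 hne) h2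
  have hvic : ∀ a, a < b → ∀ m, msq (a+1) ≤ m → m < msq a →
      victim r (t+1) (fifCache r (C0 m) t)
        = victim r (t+1) (fifCache r (C0 (msq a - 1)) t) := by
    intro a ha m hm1 hm2
    obtain ⟨ha1, ha2⟩ := hstep a ha
    have hDne : (fifCache r (C0 (msq a - 1)) t).Nonempty := by
      apply Finset.card_pos.1
      rw [hC]; omega
    have hvD := (victim_spec r (t+1) hDne).1
    have hvn : victim r (t+1) (fifCache r (C0 (msq a - 1)) t) ∈ C0 n := by
      have hm0n : msq a ≤ n := by
        have h1n : msq a ≤ msq 0 := hmsqle 0 a (Nat.zero_le a) (le_of_lt ha)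
        have h2n : msq 0 ≤ n := by
          rw [← hq0]; exact hposle t _ n (by rw [hfix t]; exact hqn)
        omega
      have hsubn : fifCache r (C0 (msq a - 1)) t ⊆ fifCache r (C0 n) t :=
        hS (by omega) t
      have hh := hsubn hvD
      rw [hfix t] at hh
      exact hh
    have hvm : victim r (t+1) (fifCache r (C0 (msq a - 1)) t) ∈ fifCache r (C0 m) t := by
      apply (hposiff t _ m hvn).2
      rw [← ha2]; exact hm1
    exact victim_subset (hS (by omega) t) hDne hvm
  have hintv : ∀ m, 1 ≤ m → m < msq 0 → ∃ a, a < b ∧ msq (a+1) ≤ m ∧ m < msq a := by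
    intro m h1 h2
    have hex : ∃ a, msq a ≤ m := ⟨b, by omega⟩
    have ha'spec : msq (Nat.find hex) ≤ m := Nat.find_spec hex
    have ha'le : Nat.find hex ≤ b := Nat.find_min' hex (by omega)
    have ha'pos : Nat.find hex ≠ 0 := by
      intro h; rw [h] at ha'spec; omega
    refine ⟨Nat.find hex - 1, by omega, ?_, ?_⟩
    · rw [(by omega : Nat.find hex - 1 + 1 = Nat.find hex)]; exact ha'spec
    · have := Nat.find_min hex (show Nat.find hex - 1 < Nat.find hex by omega)
      omega
  refine ⟨?_, ?_, ?_⟩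
  · -- requested page at position 1
    apply hset _ 1 le_rfl
    · rcases Nat.lt_or_ge 1 (msq 0) with h' | h'
      · rw [hstep_lt 1 le_rfl h']
        exact Finset.mem_insert_self _ _
      · rw [hstep_ge 1 h']
        exact (hposiff t _ 1 hqn).2 (by omega)
    · intro m hm
      have hm0 : m = 0 := by omega
      rw [hm0, hzero]
      exact Finset.notMem_empty _
  · -- cascade pages
    intro a h1a hab p hpn hpp
    have ham : a - 1 < b := by omega
    have hlt : msq a < msq (a-1) := by
      have hd := hdec (a-1) ham
      rw [(by omega : a - 1 + 1 = a)] at hd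
      exact hd
    have hma1 : 1 ≤ msq a := hmsq1 a hab
    have hltm0 : msq a < msq 0 := hmsqlt a 0 (by omega) hab
    have hpq : p ≠ r (t+1) := by
      intro h
      rw [h, hq0] at hpp
      omega
    apply hset p (msq (a-1)) (hmsq1 (a-1) (by omega))
    · rcases Nat.eq_or_lt_of_le h1a with h' | h'
      · -- a = 1
        rw [(by omega : a - 1 = 0)]
        rw [hstep_ge (msq 0) le_rfl]
        exact (hposiff t p (msq 0) hpn).2 (by omega)
      · -- a ≥ 2
        have hk0 : msq (a-1) < msq 0 := hmsqlt (a-1) 0 (by omega) (by omega)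
        have hk1 : 1 ≤ msq (a-1) := hmsq1 (a-1) (by omega)
        rw [hstep_lt (msq (a-1)) hk1 hk0]
        apply Finset.mem_insert_of_mem
        refine Finset.mem_erase.2 ⟨?_, (hposiff t p (msq (a-1)) hpn).2 (by omega)⟩
        have ha2b : a - 2 < b := by omega
        have hvv := hvic (a-2) ha2b (msq (a-1))
          (le_of_eq (congrArg msq (by omega : a - 2 + 1 = a - 1)))
          (by have hd := hdec (a-2) ha2b
              rw [(by omega : a - 2 + 1 = a - 1)] at hd; exact hd)
        intro hpe
        have hps := (hstep (a-2) ha2b).2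
        rw [(by omega : a - 2 + 1 = a - 1)] at hps
        rw [hpe, hvv, ← hps] at hpp
        omega
    · intro m hm
      rcases Nat.eq_zero_or_pos m with rfl | hm1
      · rw [hzero]; exact Finset.notMem_empty _
      · have hmlt0 : m < msq 0 := by
          have hle0 : msq (a-1) ≤ msq 0 := hmsqle 0 (a-1) (Nat.zero_le _) (by omega)
          omega
        rw [hstep_lt m hm1 hmlt0]
        intro hmem
        rcases Finset.mem_insert.1 hmem with h' | h'
        · exact hpq h'
        · rcases Finset.mem_erase.1 h' with ⟨hpv, hpC⟩
          rcases Nat.lt_or_ge m (msq a) with h'' | h''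
          · have := hposle t p m hpC
            omega
          · have hvv := hvic (a-1) ham m
              (by have e : a - 1 + 1 = a := by omega
                  rw [e]; exact h'') hm
            have hDne : (fifCache r (C0 (msq (a-1) - 1)) t).Nonempty := by
              apply Finset.card_pos.1
              rw [hC]
              have := (hstep (a-1) ham).1
              omega
            have hvmem := (victim_spec r (t+1) hDne).1
            have hvn : victim r (t+1) (fifCache r (C0 (msq (a-1) - 1)) t) ∈ C0 n := by
              have h2n : msq 0 ≤ n := by
                rw [← hq0]; exact hposle t _ n (by rw [hfix t]; exact hqn)
              have h1n : msq (a-1) ≤ msq 0 := hmsqle 0 (a-1) (Nat.zero_le _) (by omega)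
              have hsubn := hS (show msq (a-1) - 1 ≤ n by omega) t
              have hh := hsubn hvmem
              rw [hfix t] at hh; exact hh
            have hpose : beladyPos r C0 t (victim r (t+1) (fifCache r (C0 (msq (a-1) - 1)) t)) = msq a := by
              have h2 := (hstep (a-1) ham).2
              rw [(by omega : a - 1 + 1 = a)] at h2
              exact h2.symm
            have hpeq : p = victim r (t+1) (fifCache r (C0 (msq (a-1) - 1)) t) :=
              hposinj t p _ hpn hvn (by rw [hpp, hpose])
            rw [hvv] at hpv
            exact hpv hpeq
  · -- unchanged pages
    intro p hpn hpq hne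
    have hk1 : 1 ≤ beladyPos r C0 t p := hpospos t p hpn
    apply hset p (beladyPos r C0 t p) hk1
    · rcases Nat.lt_or_ge (beladyPos r C0 t p) (msq 0) with h' | h'
      · rw [hstep_lt _ hk1 h']
        apply Finset.mem_insert_of_mem
        refine Finset.mem_erase.2 ⟨?_, hposmem t p hpn⟩
        obtain ⟨a, hab, ha1, ha2⟩ := hintv _ hk1 h'
        have hvv := hvic a hab _ ha1 ha2
        intro hpe
        have hps := (hstep a hab).2
        apply hne (a+1) (by omega)
        rw [hpe, hvv, hps]
      · rw [hstep_ge _ h']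
        exact hposmem t p hpn
    · intro m hm
      rcases Nat.eq_zero_or_pos m with rfl | hm1
      · rw [hzero]; exact Finset.notMem_empty _
      · rcases Nat.lt_or_ge m (msq 0) with h' | h'
        · rw [hstep_lt m hm1 h']
          intro hmem
          rcases Finset.mem_insert.1 hmem with h'' | h''
          · exact hpq h''
          · have := hposle t p m (Finset.mem_erase.1 h'').2
            omega
        · rw [hstep_ge m h']
          intro hmem
          have := hposle t p m hmem
          omega
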